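/- Let (u,K) be a Griffith almost-minimizer in Ω with gauge h(t) = c_h t^α. Let x₀ ∈ K, r₀ > 0, ε₀ > 0 be such that 200 A ε₀ ≤ τ, K satisfies Hypothesis-H(ε₀,x₀,r₀) and h(r₀) ≤ 1 (here τ, A are the universal constants of the bad-mass construction). Let (B_i)_{i∈I} be a countable family of pairwise disjoint balls B_i = B(x_i, r_i) with x_i ∈ K ∩ closure(B(x₀,3r₀/4)), r_i = A d(x_i) > 0, and R(x₀,r₀) ⊆ ⋃_i B(x_i, 4 r_i). Define δ : K ∩ closure(B(x₀,3r₀/4)) → [0,∞) by δ(x) := min( inf_{i∈I} ( |x − x_i| + r_i ), dist( x, K \ ⋃_i B(x_i, 9 r_i) ) ). Then: δ is 1-Lipschitz; δ(x_k) = r_k for every k ∈ I; δ(x) ≤ max_k (10 r_k) ≤ r₀/4 for every x ∈ K ∩ closure(B(x₀,3r₀/4)); and β_K(x,r) ≤ 4τ for every x ∈ K ∩ closure(B(x₀,3r₀/4)) and every r ∈ (δ(x), r₀/4]. In particular δ is a geometric function with parameters (3r₀/4, 4τ). -/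

import Mathlib

open Metric MeasureTheory Set Filter
open scoped RealInnerProductSpace ENNReal NNReal Topology

noncomputable section

abbrev Euc (N : ℕ) := EuclideanSpace ℝ (Fin N)

variable {N : ℕ}

/-- Affine hyperplane through `x` with normal `ν`. -/
def hplane (x ν : Euc N) : Set (Euc N) := {y | (inner ℝ (y - x) ν : ℝ) = 0}

/-- Bilateral flatness `β_K(x,r)`. -/
def flatness (K : Set (Euc N)) (x : Euc N) (r : ℝ) : ℝ :=
  r⁻¹ * ⨅ ν : {ν : Euc N // ‖ν‖ = 1},
    max (⨆ y : ↥(K ∩ ball x r), infDist (y : Euc N) (hplane x ν.1))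
        (⨆ y : ↥(hplane x ν.1 ∩ ball x r), infDist (y : Euc N) K)

/-- `K` is relatively closed in `Ω`. -/
def RelClosedIn (K Ω : Set (Euc N)) : Prop := K ⊆ Ω ∧ closure K ∩ Ω ⊆ K

/-- Connected component of `B(x₀,r₀) \ K` containing `x₀ + (3/4) r₀ ν`. -/
def posCompo (K : Set (Euc N)) (x₀ : Euc N) (r₀ : ℝ) (ν : Euc N) : Set (Euc N) :=
  connectedComponentIn (ball x₀ r₀ \ K) (x₀ + (3 / 4 * r₀) • ν)

/-- Connected component of `B(x₀,r₀) \ K` containing `x₀ - (3/4) r₀ ν`. -/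
def negCompo (K : Set (Euc N)) (x₀ : Euc N) (r₀ : ℝ) (ν : Euc N) : Set (Euc N) :=
  connectedComponentIn (ball x₀ r₀ \ K) (x₀ - (3 / 4 * r₀) • ν)

/-- `K` separates in `B(x₀,r₀)` with respect to the hyperplane through `x₀` of unit normal `ν`. -/
def SeparatesWith (K : Set (Euc N)) (x₀ : Euc N) (r₀ : ℝ) (ν : Euc N) : Prop :=
  ‖ν‖ = 1 ∧
  (∀ y ∈ K ∩ ball x₀ r₀, infDist y (hplane x₀ ν) ≤ r₀ / 2) ∧
  ball (x₀ + (3 / 4 * r₀) • ν) (r₀ / 4) ⊆ posCompo K x₀ r₀ ν ∧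
  ball (x₀ - (3 / 4 * r₀) • ν) (r₀ / 4) ⊆ negCompo K x₀ r₀ ν ∧
  posCompo K x₀ r₀ ν ≠ negCompo K x₀ r₀ ν

/-- `K` separates in `B(x₀,r₀)`. -/
def Separates (K : Set (Euc N)) (x₀ : Euc N) (r₀ : ℝ) : Prop := ∃ ν, SeparatesWith K x₀ r₀ ν

/-- The symmetrized gradient `e(u) = (Du + Duᵀ)/2`. -/
def symGrad (u : Euc N → Euc N) (x : Euc N) (i j : Fin N) : ℝ :=
  (fderiv ℝ u x (EuclideanSpace.single j 1) i + fderiv ℝ u x (EuclideanSpace.single i 1) j) / 2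

/-- `|e(u)|²`. -/
def eDensity (u : Euc N → Euc N) (x : Euc N) : ℝ := ∑ i, ∑ j, (symGrad u x i j) ^ 2

/-- Elastic energy `∫_S |e(u)|² dx`. -/
def energy (u : Euc N → Euc N) (S : Set (Euc N)) : ℝ := ∫ x in S, eDensity u x

/-- Admissible pair `(u,K)` in `Ω`. -/
def Admissible (Ω : Set (Euc N)) (u : Euc N → Euc N) (K : Set (Euc N)) : Prop :=
  RelClosedIn K Ω ∧ DifferentiableOn ℝ u (Ω \ K) ∧ LocallyIntegrableOn (eDensity u) (Ω \ K)

/-- `K` is coral. -/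
def Coral (K : Set (Euc N)) : Prop := ∀ x ∈ K, ∀ r > 0, 0 < μH[(N : ℝ) - 1] (K ∩ ball x r)

/-- `(v,L)` is a competitor of `(u,K)` in `B(x,r)`. -/
def Competitor (Ω : Set (Euc N)) (u : Euc N → Euc N) (K : Set (Euc N)) (x : Euc N) (r : ℝ)
    (v : Euc N → Euc N) (L : Set (Euc N)) : Prop :=
  Admissible Ω v L ∧ L \ ball x r = K \ ball x r ∧
  ∀ᵐ y ∂(volume : Measure (Euc N)), y ∈ Ω \ (K ∪ ball x r) → v y = u y

/-- `(u,K)` is a Griffith almost-minimizer with gauge `h` in `Ω`. -/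
def GriffithAM (Ω : Set (Euc N)) (h : ℝ → ℝ) (u : Euc N → Euc N) (K : Set (Euc N)) : Prop :=
  Admissible Ω u K ∧ Coral K ∧
  ∀ x r, 0 < r → closure (ball x r) ⊆ Ω →
    ∀ v L, Competitor Ω u K x r v L →
      ENNReal.ofReal (energy u (ball x r \ K)) + μH[(N : ℝ) - 1] (K ∩ ball x r) ≤
      ENNReal.ofReal (energy v (ball x r \ L)) + μH[(N : ℝ) - 1] (L ∩ ball x r) +
        ENNReal.ofReal (h r * r ^ (N - 1))

/-- Normalized energy `ω_u(x,r)`. -/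
def nenergy (u : Euc N → Euc N) (K : Set (Euc N)) (x : Euc N) (r : ℝ) : ℝ :=
  energy u (ball x r \ K) / r ^ (N - 1)

/-- A deformation of `E` in the ball `B`, inside the ambient open set `Ω`. -/
def IsDeformation (Ω E B : Set (Euc N)) (f : Euc N → Euc N) : Prop :=
  (∃ L : ℝ≥0, LipschitzOnWith L f E) ∧ f '' E ⊆ Ω ∧ f '' (E ∩ B) ⊆ B ∧
  IsCompact (closure {x | x ∈ E ∧ f x ≠ x}) ∧ closure {x | x ∈ E ∧ f x ≠ x} ⊆ B

/-- `F` is a topological competitor of `E` in the ball `B`. -/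
def TopCompetitor (Ω E B F : Set (Euc N)) : Prop :=
  ∃ f, IsDeformation Ω E B f ∧ F = f '' E

/-- `E` is an almost-minimal set in `V` with gauge `g`. -/
def AlmostMinimalSet (V : Set (Euc N)) (g : ℝ → ℝ≥0∞) (E : Set (Euc N)) : Prop :=
  RelClosedIn E V ∧ (∀ x ∈ V, ∃ r > 0, μH[(N : ℝ) - 1] (E ∩ ball x r) < ⊤) ∧
  ∀ x ∈ E, ∀ r, 0 < r → ball x r ⊆ V →
    ∀ f : Euc N → Euc N, IsDeformation V E (ball x r) f →
      μH[(N : ℝ) - 1] (E ∩ ball x r) ≤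
        μH[(N : ℝ) - 1] (f '' (E ∩ ball x r)) + g r * ENNReal.ofReal (r ^ (N - 1))

/-- `E` is a minimal set in `V`. -/
def MinimalSet (V E : Set (Euc N)) : Prop := AlmostMinimalSet V (fun _ => 0) E

/-- Hypothesis `H(ε₀, x₀, r₀)`. -/
def HypH (Ω K : Set (Euc N)) (ε₀ : ℝ) (x₀ : Euc N) (r₀ : ℝ) : Prop :=
  ball x₀ r₀ ⊆ Ω ∧ Separates K x₀ r₀ ∧ flatness K x₀ r₀ ≤ ε₀

/-- Geometric function with parameters `(ρ, τ)`. -/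
def GeomFn (K : Set (Euc N)) (x₀ : Euc N) (r₀ ρ τ : ℝ) (δ : Euc N → ℝ) : Prop :=
  LipschitzOnWith 100 δ (K ∩ closure (ball x₀ ρ)) ∧
  (∀ x ∈ K ∩ closure (ball x₀ ρ), δ x ∈ Icc 0 (r₀ / 4)) ∧
  ∀ x ∈ K ∩ closure (ball x₀ ρ), ∀ r ∈ Ioc (δ x) (r₀ / 4), flatness K x r ≤ τ

/-- The stopping distance `d(x)` of the bad-mass construction. -/
def stopR (τ : ℝ) (K : Set (Euc N)) (r₀ : ℝ) (x : Euc N) : ℝ :=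
  sInf {r : ℝ | 0 < r ∧ ∀ t ∈ Icc r (r₀ / 4), flatness K x t ≤ τ}

/-- The bad region `R(x₀,r₀)`. -/
def badRegion (τ A : ℝ) (K : Set (Euc N)) (x₀ : Euc N) (r₀ : ℝ) : Set (Euc N) :=
  ⋃ x ∈ K ∩ closure (ball x₀ (3 * r₀ / 4)),
    ⋃ (_ : 0 < stopR τ K r₀ x), ball x (A * stopR τ K r₀ x)

/-- The bad mass `m_K(x₀,r₀)`. -/
def badMass (τ A : ℝ) (K : Set (Euc N)) (x₀ : Euc N) (r₀ : ℝ) : ℝ :=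
  (μH[(N : ℝ) - 1] (K ∩ badRegion τ A K x₀ r₀)).toReal / r₀ ^ (N - 1)

end

/-!
Everything rests on one transfer inequality for bilateral flatness: if `x, x' ∈ K` and
`B(x, r) ⊆ B(x', r')`, then `β(x, r) ≤ 2 (r'/r) β(x', r')`, obtained by translating the best
hyperplane at `x'` to `x`. Applied from `(x₀, r₀)`, where `β ≤ ε₀ ≤ τ/(200A)`, it gives
`β(x, t) ≤ τ` for all scales `t ≥ r₀/(100A)`, hence `d(x) ≤ r₀/(100A)` and `rᵢ ≤ r₀/100`.
At a scale `r ∈ (δ(x), d(x)]` the point `x` lies in the bad region, so in some `B(xᵢ, 4rᵢ)`;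
there `dist(x, K \ ⋃ B(xⱼ, 9rⱼ)) ≥ 5rᵢ`, so `δ(x) = |x - xⱼ| + rⱼ < r` for some `j`, and the
transfer from `(xⱼ, |x - xⱼ| + r)`, a scale above `d(xⱼ) ≤ rⱼ`, gives `β(x, r) ≤ 4τ`.

Since `infDist x ∅ = 0`, the identity `δ(xₖ) = rₖ` needs `K \ ⋃ B(xᵢ, 9rᵢ) ≠ ∅`: as `N ≥ 2`, the
hyperplane approximating `K` at `(x₀, r₀)` has points at distance `9r₀/10` from `x₀`, and `K`
comes close to them, outside all the balls.
-/

noncomputable section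

theorem norm_sub_inner_smul_le {E : Type*} [NormedAddCommGroup E] [InnerProductSpace ℝ E]
    {ν : E} (hν : ‖ν‖ = 1) (v : E) : ‖v - ⟪v, ν⟫ • ν‖ ≤ ‖v‖ := by
  have h : ‖v - ⟪v, ν⟫ • ν‖ ^ 2 = ‖v‖ ^ 2 - ⟪v, ν⟫ ^ 2 := by
    rw [norm_sub_sq_real, real_inner_smul_right, norm_smul, Real.norm_eq_abs, hν]
    rw [mul_one, sq_abs]
    ring
  refine (pow_le_pow_iff_left₀ (norm_nonneg _) (norm_nonneg _) two_ne_zero).1 ?_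
  rw [h]
  linarith [sq_nonneg ⟪v, ν⟫]

theorem exists_norm_eq_one_inner_eq_zero {E : Type*} [NormedAddCommGroup E]
    [InnerProductSpace ℝ E] [FiniteDimensional ℝ E] (hE : 2 ≤ Module.finrank ℝ E) (ν : E) :
    ∃ w : E, ‖w‖ = 1 ∧ ⟪ν, w⟫ = 0 := by
  have hspan : Module.finrank ℝ (ℝ ∙ ν) ≤ 1 := by
    simpa using finrank_span_le_card ({ν} : Set E)
  have hpos : 0 < Module.finrank ℝ (ℝ ∙ ν)ᗮ := by
    have := (ℝ ∙ ν).finrank_add_finrank_orthogonal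
    omega
  obtain ⟨⟨w, hw⟩, hw0⟩ := Module.finrank_pos_iff_exists_ne_zero.1 hpos
  refine ⟨‖w‖⁻¹ • w, norm_smul_inv_norm (by simpa using hw0), ?_⟩
  rw [inner_smul_right, Submodule.mem_orthogonal_singleton_iff_inner_right.1 hw, mul_zero]

theorem dist_le_of_mem_closure_ball {X : Type*} [PseudoMetricSpace X] {x x₀ : X} {r : ℝ}
    (hx : x ∈ closure (ball x₀ r)) : dist x x₀ ≤ r :=
  mem_closedBall.1 (closure_ball_subset_closedBall hx)

section VitaliDelta

variable {X I : Type*} [PseudoMetricSpace X] (K : Set X) (xc : I → X) (ri : I → ℝ)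

def vitaliDelta (x : X) : ℝ :=
  min (⨅ i, (dist x (xc i) + ri i)) (infDist x (K \ ⋃ i, ball (xc i) (9 * ri i)))

variable {K xc ri} {x : X}

theorem bddBelow_dist_add (hri : ∀ i, 0 ≤ ri i) (x : X) :
    BddBelow (range fun i => dist x (xc i) + ri i) :=
  ⟨0, forall_mem_range.2 fun i => add_nonneg dist_nonneg (hri i)⟩

theorem vitaliDelta_nonneg (hri : ∀ i, 0 ≤ ri i) (x : X) : 0 ≤ vitaliDelta K xc ri x :=
  le_min (Real.iInf_nonneg fun i => add_nonneg dist_nonneg (hri i)) infDist_nonneg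

theorem vitaliDelta_le_dist_add (hri : ∀ i, 0 ≤ ri i) (x : X) (i : I) :
    vitaliDelta K xc ri x ≤ dist x (xc i) + ri i :=
  (min_le_left _ _).trans (ciInf_le (bddBelow_dist_add hri x) i)

theorem lipschitzWith_vitaliDelta (hri : ∀ i, 0 ≤ ri i) :
    LipschitzWith 1 (vitaliDelta K xc ri) := by
  have hinf : LipschitzWith 1 fun x => ⨅ i, (dist x (xc i) + ri i) := by
    refine LipschitzWith.of_le_add fun x y => ?_
    cases isEmpty_or_nonempty I
    · simp
    · rw [← sub_le_iff_le_add]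
      refine le_ciInf fun i => sub_le_iff_le_add.2 ?_
      calc ⨅ i, (dist x (xc i) + ri i) ≤ dist x (xc i) + ri i :=
            ciInf_le (bddBelow_dist_add hri x) i
        _ ≤ dist y (xc i) + ri i + dist x y := by linarith [dist_triangle x y (xc i)]
  have h := hinf.min (lipschitz_infDist_pt (K \ ⋃ i, ball (xc i) (9 * ri i)))
  rwa [max_self] at h

theorem vitaliDelta_le_zero_of_notMem (hx : x ∈ K) (hxB : x ∉ ⋃ i, ball (xc i) (9 * ri i)) :
    vitaliDelta K xc ri x ≤ 0 :=
  (min_le_right _ _).trans (infDist_zero_of_mem (mem_sdiff_of_mem hx hxB)).le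

theorem vitaliDelta_le_iSup (hri : ∀ i, 0 ≤ ri i) (hbdd : BddAbove (range ri))
    (hx : x ∈ K) : vitaliDelta K xc ri x ≤ ⨆ i, 10 * ri i := by
  obtain ⟨b, hb⟩ := hbdd
  by_cases hxB : x ∈ ⋃ i, ball (xc i) (9 * ri i)
  · obtain ⟨i, hi⟩ := mem_iUnion.1 hxB
    calc vitaliDelta K xc ri x ≤ dist x (xc i) + ri i := vitaliDelta_le_dist_add hri x i
      _ ≤ 10 * ri i := by linarith [mem_ball.1 hi]
      _ ≤ ⨆ i, 10 * ri i :=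
        le_ciSup (f := fun i => 10 * ri i)
          ⟨10 * b, forall_mem_range.2 fun j => by linarith [hb (mem_range_self j)]⟩ i
  · exact (vitaliDelta_le_zero_of_notMem hx hxB).trans
      (Real.iSup_nonneg fun i => by linarith [hri i])

theorem sub_dist_le_infDist (hS : (K \ ⋃ i, ball (xc i) (9 * ri i)).Nonempty) (x : X) (i : I) :
    9 * ri i - dist x (xc i) ≤ infDist x (K \ ⋃ i, ball (xc i) (9 * ri i)) := by
  refine (le_infDist hS).2 fun z hz => ?_
  have hzi : 9 * ri i ≤ dist z (xc i) := not_lt.1 fun h => hz.2 (mem_iUnion.2 ⟨i, h⟩)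
  linarith [dist_triangle z x (xc i), dist_comm x z]

theorem vitaliDelta_eq_iInf (hri : ∀ i, 0 ≤ ri i)
    (hS : (K \ ⋃ i, ball (xc i) (9 * ri i)).Nonempty) {i : I}
    (hx : dist x (xc i) < 4 * ri i) :
    vitaliDelta K xc ri x = ⨅ i, (dist x (xc i) + ri i) :=
  min_eq_left <| (ciInf_le (bddBelow_dist_add hri x) i).trans <| by
    linarith [sub_dist_le_infDist hS x i]

end VitaliDelta

theorem vitaliDelta_center {E I : Type*} [NormedAddCommGroup E] [NormedSpace ℝ E] {K : Set E}
    {xc : I → E} {ri : I → ℝ} (hri : ∀ i, 0 < ri i)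
    (hdisj : Pairwise fun i j => Disjoint (ball (xc i) (ri i)) (ball (xc j) (ri j)))
    (hS : (K \ ⋃ i, ball (xc i) (9 * ri i)).Nonempty) (k : I) :
    vitaliDelta K xc ri (xc k) = ri k := by
  have hri' : ∀ i, 0 ≤ ri i := fun i => (hri i).le
  have hk : 0 < ri k := hri k
  have : Nonempty I := ⟨k⟩
  rw [vitaliDelta_eq_iInf hri' hS (i := k) (by simpa using by linarith)]
  refine le_antisymm ((ciInf_le (bddBelow_dist_add hri' (xc k)) k).trans (by simp))
    (le_ciInf fun j => ?_)
  rcases eq_or_ne k j with rfl | hkj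
  · simp
  · linarith [(disjoint_ball_ball_iff hk (hri j)).1 (hdisj hkj), hri j]

section Flatness

variable {N : ℕ} {K : Set (Euc N)} {x x' ν : Euc N} {r r' r₀ c τ : ℝ}

theorem mem_hplane_iff {y : Euc N} : y ∈ hplane x ν ↔ ⟪y - x, ν⟫ = 0 := Iff.rfl

theorem infDist_hplane (hν : ‖ν‖ = 1) (y : Euc N) :
    infDist y (hplane x ν) = |⟪y - x, ν⟫| := by
  refine le_antisymm ?_ ((le_infDist ⟨x, by simp [mem_hplane_iff]⟩).2 fun z hz => ?_)
  · have hmem : y - ⟪y - x, ν⟫ • ν ∈ hplane x ν := by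
      rw [mem_hplane_iff, sub_right_comm, inner_sub_left, real_inner_smul_left,
        real_inner_self_eq_norm_sq, hν]
      ring
    calc infDist y (hplane x ν) ≤ dist y (y - ⟪y - x, ν⟫ • ν) := infDist_le_dist_of_mem hmem
      _ = |⟪y - x, ν⟫| := by simp [norm_smul, hν]
  · have hyz : ⟪y - x, ν⟫ = ⟪y - z, ν⟫ := by
      rw [← sub_add_sub_cancel y z x, inner_add_left, mem_hplane_iff.1 hz, add_zero]
    rw [hyz, dist_eq_norm]
    simpa [hν] using abs_real_inner_le_norm (y - z) ν

theorem flatness_nonneg (K : Set (Euc N)) (x : Euc N) {r : ℝ} (hr : 0 ≤ r) :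
    0 ≤ flatness K x r :=
  mul_nonneg (inv_nonneg.2 hr) <| Real.iInf_nonneg fun _ =>
    (Real.iSup_nonneg fun _ => infDist_nonneg).trans (le_max_left _ _)

theorem exists_hplane_of_flatness_lt [NeZero N] (hx : x ∈ K) (hr : 0 < r)
    (h : flatness K x r < c) :
    ∃ ν : Euc N, ‖ν‖ = 1 ∧ (∀ y ∈ K ∩ ball x r, |⟪y - x, ν⟫| < c * r) ∧
      ∀ y ∈ hplane x ν ∩ ball x r, infDist y K < c * r := by
  have : Nonempty {ν : Euc N // ‖ν‖ = 1} := ⟨⟨EuclideanSpace.single 0 1, by simp⟩⟩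
  rw [flatness, inv_mul_lt_iff₀ hr, mul_comm r] at h
  obtain ⟨⟨ν, hν⟩, hlt⟩ := exists_lt_of_ciInf_lt h
  obtain ⟨hK, hP⟩ := max_lt_iff.1 hlt
  refine ⟨ν, hν, fun y hy => ?_, fun y hy => ?_⟩
  · rw [← infDist_hplane hν]
    refine lt_of_le_of_lt (le_ciSup (f := fun y : ↥(K ∩ ball x r) =>
      infDist (y : Euc N) (hplane x ν)) ⟨r, forall_mem_range.2 fun z => ?_⟩ ⟨y, hy⟩) hK
    exact (infDist_le_dist_of_mem (by simp [mem_hplane_iff])).trans (mem_ball.1 z.2.2).le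
  · refine lt_of_le_of_lt (le_ciSup (f := fun y : ↥(hplane x ν ∩ ball x r) =>
      infDist (y : Euc N) K) ⟨r, forall_mem_range.2 fun z => ?_⟩ ⟨y, hy⟩) hP
    exact (infDist_le_dist_of_mem hx).trans (mem_ball.1 z.2.2).le

theorem flatness_le_of_hplane {d : ℝ} (hr : 0 < r) (hν : ‖ν‖ = 1) (hd : 0 ≤ d)
    (hK : ∀ y ∈ K ∩ ball x r, |⟪y - x, ν⟫| ≤ d)
    (hP : ∀ y ∈ hplane x ν ∩ ball x r, infDist y K ≤ d) :
    flatness K x r ≤ d / r := by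
  rw [flatness, div_eq_inv_mul]
  refine mul_le_mul_of_nonneg_left ?_ (inv_nonneg.2 hr.le)
  refine (ciInf_le ⟨0, forall_mem_range.2 fun _ =>
    (Real.iSup_nonneg fun _ => infDist_nonneg).trans (le_max_left _ _)⟩ ⟨ν, hν⟩).trans ?_
  refine max_le (Real.iSup_le (fun y => ?_) hd) (Real.iSup_le (fun y => hP y y.2) hd)
  rw [infDist_hplane hν]
  exact hK y y.2

theorem flatness_le_two_mul_flatness [NeZero N] (hx : x ∈ K) (hx' : x' ∈ K) (hr : 0 < r)
    (hrr' : dist x x' + r ≤ r') : flatness K x r ≤ 2 * (r' / r) * flatness K x' r' := by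
  have hr' : 0 < r' := by linarith [dist_nonneg (x := x) (y := x')]
  have hball : ball x r ⊆ ball x' r' := ball_subset_ball' (by linarith)
  have hk : 0 < 2 * (r' / r) := by positivity
  rw [mul_comm, ← div_le_iff₀ hk]
  refine le_of_forall_gt_imp_ge_of_dense fun c hc => ?_
  rw [div_le_iff₀ hk]
  obtain ⟨ν, hν, hK, hP⟩ := exists_hplane_of_flatness_lt hx' hr' hc
  have hc0 : 0 < c := (flatness_nonneg K x' hr'.le).trans_lt hc
  have hxν : |⟪x - x', ν⟫| < c * r' := hK x ⟨hx, hball (mem_ball_self hr)⟩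
  calc flatness K x r ≤ 2 * c * r' / r := flatness_le_of_hplane hr hν (by positivity) ?_ ?_
    _ = c * (2 * (r' / r)) := by ring
  · intro y hy
    rw [← sub_sub_sub_cancel_right y x x', inner_sub_left]
    linarith [abs_sub ⟪y - x', ν⟫ ⟪x - x', ν⟫, hK y ⟨hy.1, hball hy.2⟩]
  · intro y hy
    have hyx' : ⟪y - x', ν⟫ = ⟪x - x', ν⟫ := by
      rw [← sub_add_sub_cancel y x x', inner_add_left, mem_hplane_iff.1 hy.1, zero_add]
    set y' := y - ⟪x - x', ν⟫ • ν
    have hy'x' : y' - x' = (y - x') - ⟪y - x', ν⟫ • ν := by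
      rw [hyx']; exact sub_right_comm _ _ _
    have hy' : y' ∈ hplane x' ν ∩ ball x' r' := by
      refine ⟨?_, mem_ball.2 ?_⟩
      · rw [mem_hplane_iff, hy'x', inner_sub_left, real_inner_smul_left,
          real_inner_self_eq_norm_sq, hν]
        ring
      · rw [dist_eq_norm, hy'x']
        exact (norm_sub_inner_smul_le hν _).trans_lt (mem_ball_iff_norm.1 (hball hy.2))
    have hyy' : dist y y' = |⟪x - x', ν⟫| := by simp [y', norm_smul, hν]
    linarith [infDist_le_infDist_add_dist (x := y) (y := y') (s := K), hP y' hy']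

theorem exists_mem_lt_dist_of_flatness_lt (hN : 2 ≤ N) (hx : x ∈ K) (hr : 0 < r)
    (h : flatness K x r < c) {s : ℝ} (hs₀ : 0 ≤ s) (hs : s < r) :
    ∃ z ∈ K, s - c * r < dist z x := by
  have : NeZero N := ⟨by omega⟩
  obtain ⟨ν, -, -, hP⟩ := exists_hplane_of_flatness_lt hx hr h
  obtain ⟨w, hw, hwν⟩ := exists_norm_eq_one_inner_eq_zero (by simpa using hN) ν
  have hpx : dist (x + s • w) x = s := by simp [norm_smul, hw, abs_of_nonneg hs₀]
  have hp : x + s • w ∈ hplane x ν ∩ ball x r := by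
    refine ⟨?_, mem_ball.2 (hpx.trans_lt hs)⟩
    rw [mem_hplane_iff, add_sub_cancel_left, real_inner_smul_left, real_inner_comm, hwν,
      mul_zero]
  obtain ⟨z, hz, hpz⟩ := (infDist_lt_iff ⟨x, hx⟩).1 (hP _ hp)
  exact ⟨z, hz, by linarith [dist_triangle (x + s • w) z x]⟩

theorem flatness_le_of_stopR_lt (h : stopR τ K r₀ x < r) (hr : r ≤ r₀ / 4) :
    flatness K x r ≤ τ := by
  obtain ⟨s, hs, hsr⟩ := exists_lt_of_csInf_lt (s := {r | 0 < r ∧ ∀ t ∈ Icc r (r₀ / 4),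
    flatness K x t ≤ τ}) ⟨|r₀| + 1, by positivity, fun t ht => by
    linarith [ht.1, ht.2, le_abs_self r₀, abs_nonneg r₀]⟩ h
  exact hs.2 r ⟨hsr.le, hr⟩

theorem stopR_nonneg : 0 ≤ stopR τ K r₀ x := Real.sInf_nonneg fun _ h => h.1.le

theorem stopR_le {s : ℝ} (hs : 0 < s) (h : ∀ t ∈ Icc s (r₀ / 4), flatness K x t ≤ τ) :
    stopR τ K r₀ x ≤ s :=
  csInf_le ⟨0, fun _ h => h.1.le⟩ ⟨hs, h⟩

end Flatness

section GeometricFunction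

variable {N : ℕ} {K : Set (Euc N)} {x x₀ : Euc N} {r r₀ ε₀ τ A : ℝ} {I : Type*}
  {xc : I → Euc N} {ri : I → ℝ}

theorem flatness_le_of_scale_ge [NeZero N] (hx₀ : x₀ ∈ K) (hflat : flatness K x₀ r₀ ≤ ε₀)
    (hε : 200 * A * ε₀ ≤ τ) (hA : 0 < A) (hr₀ : 0 < r₀)
    (hx : x ∈ K ∩ closure (ball x₀ (3 * r₀ / 4))) (hr : r ∈ Icc (r₀ / (100 * A)) (r₀ / 4)) :
    flatness K x r ≤ τ := by
  have hr0 : 0 < r := lt_of_lt_of_le (by positivity) hr.1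
  have hratio : r₀ / r ≤ 100 * A := by
    have h := hr.1
    rw [div_le_iff₀ (by positivity)] at h
    rw [div_le_iff₀ hr0]
    linarith
  calc flatness K x r ≤ 2 * (r₀ / r) * flatness K x₀ r₀ :=
        flatness_le_two_mul_flatness hx.1 hx₀ hr0
          (by linarith [dist_le_of_mem_closure_ball hx.2, hr.2])
    _ ≤ 2 * (100 * A) * ε₀ := by have := flatness_nonneg K x₀ hr₀.le; gcongr
    _ ≤ τ := by linarith

theorem mul_stopR_le [NeZero N] (hx₀ : x₀ ∈ K) (hflat : flatness K x₀ r₀ ≤ ε₀)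
    (hε : 200 * A * ε₀ ≤ τ) (hA : 0 < A) (hr₀ : 0 < r₀)
    (hx : x ∈ K ∩ closure (ball x₀ (3 * r₀ / 4))) : A * stopR τ K r₀ x ≤ r₀ / 100 :=
  calc A * stopR τ K r₀ x ≤ A * (r₀ / (100 * A)) := by
        gcongr
        exact stopR_le (by positivity) fun t ht =>
          flatness_le_of_scale_ge hx₀ hflat hε hA hr₀ hx ht
    _ = r₀ / 100 := by field_simp

theorem nonempty_diff_iUnion_ball (hN : 2 ≤ N) (hx₀ : x₀ ∈ K) (hr₀ : 0 < r₀)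
    (hflat : flatness K x₀ r₀ < 1 / 100) (hxc : ∀ i, dist (xc i) x₀ ≤ 3 * r₀ / 4)
    (hri : ∀ i, ri i ≤ r₀ / 100) : (K \ ⋃ i, ball (xc i) (9 * ri i)).Nonempty := by
  obtain ⟨z, hz, hzx₀⟩ := exists_mem_lt_dist_of_flatness_lt hN hx₀ hr₀ hflat
    (s := 9 * r₀ / 10) (by positivity) (by linarith)
  refine ⟨z, hz, fun hzB => ?_⟩
  obtain ⟨i, hi⟩ := mem_iUnion.1 hzB
  linarith [mem_ball.1 hi, dist_triangle z (xc i) x₀, hxc i, hri i]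

theorem flatness_le_of_vitaliDelta_lt [NeZero N] (hA : 1 ≤ A) (hτ : 0 ≤ τ)
    (hri : ∀ i, ri i = A * stopR τ K r₀ (xc i)) (hxc : ∀ i, xc i ∈ K)
    (hcover : badRegion τ A K x₀ r₀ ⊆ ⋃ i, ball (xc i) (4 * ri i))
    (hS : (K \ ⋃ i, ball (xc i) (9 * ri i)).Nonempty)
    (hx : x ∈ K ∩ closure (ball x₀ (3 * r₀ / 4))) (hδr : vitaliDelta K xc ri x < r)
    (hr : r ≤ r₀ / 8) : flatness K x r ≤ 4 * τ := by
  have hri₀ : ∀ i, 0 ≤ ri i := fun i => by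
    rw [hri]; exact mul_nonneg (by linarith) stopR_nonneg
  have hr0 : 0 < r := (vitaliDelta_nonneg hri₀ x).trans_lt hδr
  rcases lt_or_ge (stopR τ K r₀ x) r with hstop | hstop
  · exact (flatness_le_of_stopR_lt hstop (by linarith)).trans (by linarith)
  have hd : 0 < stopR τ K r₀ x := hr0.trans_le hstop
  have hbad : x ∈ badRegion τ A K x₀ r₀ :=
    mem_biUnion hx (mem_iUnion.2 ⟨hd, mem_ball_self (mul_pos (by linarith) hd)⟩)
  obtain ⟨i, hi⟩ := mem_iUnion.1 (hcover hbad)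
  rw [vitaliDelta_eq_iInf hri₀ hS (mem_ball.1 hi)] at hδr
  have : Nonempty I := ⟨i⟩
  obtain ⟨j, hj⟩ := exists_lt_of_ciInf_lt hδr
  set r' := dist x (xc j) + r with hr'
  have hdist : dist x (xc j) < r := by linarith [hri₀ j]
  have hstopj : stopR τ K r₀ (xc j) ≤ ri j := by
    rw [hri]; exact le_mul_of_one_le_left stopR_nonneg hA
  have hflatj : flatness K (xc j) r' ≤ τ :=
    flatness_le_of_stopR_lt (by linarith [dist_nonneg (x := x) (y := xc j)]) (by linarith)
  have hratio : r' / r ≤ 2 := by rw [div_le_iff₀ hr0]; linarith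
  calc flatness K x r ≤ 2 * (r' / r) * flatness K (xc j) r' :=
        flatness_le_two_mul_flatness hx.1 (hxc j) hr0 le_rfl
    _ ≤ 2 * 2 * τ := by
        have := flatness_nonneg K (xc j) (show 0 ≤ r' by positivity)
        gcongr
    _ = 4 * τ := by ring

theorem flatness_le_of_mem_Ioc_vitaliDelta [NeZero N] (hx₀ : x₀ ∈ K)
    (hflat : flatness K x₀ r₀ ≤ ε₀) (hε : 200 * A * ε₀ ≤ τ) (hA : 1 ≤ A) (hτ : 0 ≤ τ)
    (hr₀ : 0 < r₀) (hri : ∀ i, ri i = A * stopR τ K r₀ (xc i)) (hxc : ∀ i, xc i ∈ K)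
    (hcover : badRegion τ A K x₀ r₀ ⊆ ⋃ i, ball (xc i) (4 * ri i))
    (hS : (K \ ⋃ i, ball (xc i) (9 * ri i)).Nonempty)
    (hx : x ∈ K ∩ closure (ball x₀ (3 * r₀ / 4))) (hr : r ∈ Ioc (vitaliDelta K xc ri x) (r₀ / 4)) :
    flatness K x r ≤ 4 * τ := by
  rcases le_or_gt (r₀ / 8) r with hlarge | hsmall
  · have hscale : r₀ / (100 * A) ≤ r₀ / 8 :=
      div_le_div_of_nonneg_left hr₀.le (by norm_num) (by linarith)
    exact (flatness_le_of_scale_ge hx₀ hflat hε (by linarith) hr₀ hx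
      ⟨hscale.trans hlarge, hr.2⟩).trans (by linarith)
  · exact flatness_le_of_vitaliDelta_lt hA hτ hri hxc hcover hS hx hr.1 hsmall.le

end GeometricFunction

end

theorem delta_is_geometric_function_general (N : ℕ) (hN : 2 ≤ N) (α : ℝ) :
    ∃ τ A₀ : ℝ, (0 < τ ∧ τ ≤ 1 / 1000000000) ∧ 100000 ≤ A₀ ∧
      ∀ c_h : ℝ, 0 < c_h → ∀ (Ω : Set (Euc N)), IsOpen Ω →
      ∀ (u : Euc N → Euc N) (K : Set (Euc N)),
        GriffithAM Ω (fun t => c_h * t ^ α) u K →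
      ∀ x₀ ∈ K, ∀ r₀ : ℝ, 0 < r₀ → ∀ ε₀ : ℝ, 0 < ε₀ →
        200 * A₀ ^ 2 * ε₀ ≤ τ → HypH Ω K ε₀ x₀ r₀ → c_h * r₀ ^ α ≤ 1 →
      ∀ (I : Type), Countable I → ∀ xc : I → Euc N,
      ∀ ri : I → ℝ, (∀ i, ri i = A₀ ^ 2 * stopR τ K r₀ (xc i)) →
        (∀ i, xc i ∈ K ∩ closure (ball x₀ (3 * r₀ / 4))) →
        (∀ i, 0 < stopR τ K r₀ (xc i)) →
        (∀ i j, i ≠ j → Disjoint (ball (xc i) (ri i)) (ball (xc j) (ri j))) →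
        badRegion τ (A₀ ^ 2) K x₀ r₀ ⊆ ⋃ i, ball (xc i) (4 * ri i) →
      ∀ δ : Euc N → ℝ,
        (δ = fun x => min (⨅ i, (dist x (xc i) + ri i))
          (infDist x (K \ ⋃ i, ball (xc i) (9 * ri i)))) →
        LipschitzOnWith 1 δ (K ∩ closure (ball x₀ (3 * r₀ / 4))) ∧
        (∀ k, δ (xc k) = ri k) ∧
        (∀ x ∈ K ∩ closure (ball x₀ (3 * r₀ / 4)), δ x ≤ ⨆ k, 10 * ri k) ∧
        (⨆ k, 10 * ri k) ≤ r₀ / 4 ∧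
        (∀ x ∈ K ∩ closure (ball x₀ (3 * r₀ / 4)), ∀ r ∈ Set.Ioc (δ x) (r₀ / 4),
          flatness K x r ≤ 4 * τ) ∧
        GeomFn K x₀ r₀ (3 * r₀ / 4) (4 * τ) δ := by
  refine ⟨1 / 1000000000, 100000, by norm_num, le_rfl, ?_⟩
  intro _ _ _ _ _ K _ x₀ hx₀ r₀ hr₀ ε₀ _ hε hH _ I _ xc ri hri hxc hstop hdisj hcover δ rfl
  have : NeZero N := ⟨by omega⟩
  have hflat : flatness K x₀ r₀ ≤ ε₀ := hH.2.2
  have hpos : ∀ i, 0 < ri i := fun i => by rw [hri]; exact mul_pos (by norm_num) (hstop i)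
  have hri₀ : ∀ i, 0 ≤ ri i := fun i => (hpos i).le
  have hle : ∀ i, ri i ≤ r₀ / 100 := fun i =>
    (hri i).trans_le (mul_stopR_le hx₀ hflat hε (by norm_num) hr₀ (hxc i))
  have hS : (K \ ⋃ i, ball (xc i) (9 * ri i)).Nonempty :=
    nonempty_diff_iUnion_ball hN hx₀ hr₀ (by norm_num at hε; linarith)
      (fun i => dist_le_of_mem_closure_ball (hxc i).2) hle
  have hsup : ⨆ k, 10 * ri k ≤ r₀ / 4 :=
    Real.iSup_le (fun k => by linarith [hle k]) (by positivity)
  have hδsup : ∀ x ∈ K ∩ closure (ball x₀ (3 * r₀ / 4)), vitaliDelta K xc ri x ≤ ⨆ k, 10 * ri k :=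
    fun x hx => vitaliDelta_le_iSup hri₀ ⟨r₀ / 100, forall_mem_range.2 hle⟩ hx.1
  have hflatδ := fun x (hx : x ∈ K ∩ closure (ball x₀ (3 * r₀ / 4))) r hr =>
    flatness_le_of_mem_Ioc_vitaliDelta (x := x) (r := r) hx₀ hflat hε (by norm_num) (by norm_num)
      hr₀ hri (fun i => (hxc i).1) hcover hS hx hr
  have hlip := lipschitzWith_vitaliDelta (K := K) (xc := xc) hri₀
  exact ⟨hlip.lipschitzOnWith, vitaliDelta_center hpos (fun i j hij => hdisj i j hij) hS,
    hδsup, hsup, hflatδ, (hlip.weaken (by norm_num)).lipschitzOnWith,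
    fun x hx => ⟨vitaliDelta_nonneg hri₀ x, (hδsup x hx).trans hsup⟩, hflatδ⟩

/-- The function `δ` built from the Vitali family of bad balls is a geometric function
with parameters `(3r₀/4, 4τ)`. -/
theorem delta_is_geometric_function (N : ℕ) (hN : 2 ≤ N) (α : ℝ) (hα : 0 < α) :
    ∃ τ A₀ : ℝ, (0 < τ ∧ τ ≤ 1 / 1000000000) ∧ 100000 ≤ A₀ ∧
      ∀ c_h : ℝ, 0 < c_h → ∀ (Ω : Set (Euc N)), IsOpen Ω →
      ∀ (u : Euc N → Euc N) (K : Set (Euc N)),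
        GriffithAM Ω (fun t => c_h * t ^ α) u K →
      ∀ x₀ ∈ K, ∀ r₀ : ℝ, 0 < r₀ → ∀ ε₀ : ℝ, 0 < ε₀ →
        200 * A₀ ^ 2 * ε₀ ≤ τ → HypH Ω K ε₀ x₀ r₀ → c_h * r₀ ^ α ≤ 1 →
      ∀ (I : Type), Countable I → ∀ xc : I → Euc N,
      ∀ ri : I → ℝ, (∀ i, ri i = A₀ ^ 2 * stopR τ K r₀ (xc i)) →
        (∀ i, xc i ∈ K ∩ closure (ball x₀ (3 * r₀ / 4))) →
        (∀ i, 0 < stopR τ K r₀ (xc i)) →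
        (∀ i j, i ≠ j → Disjoint (ball (xc i) (ri i)) (ball (xc j) (ri j))) →
        badRegion τ (A₀ ^ 2) K x₀ r₀ ⊆ ⋃ i, ball (xc i) (4 * ri i) →
      ∀ δ : Euc N → ℝ,
        (δ = fun x => min (⨅ i, (dist x (xc i) + ri i))
          (infDist x (K \ ⋃ i, ball (xc i) (9 * ri i)))) →
        LipschitzOnWith 1 δ (K ∩ closure (ball x₀ (3 * r₀ / 4))) ∧
        (∀ k, δ (xc k) = ri k) ∧
        (∀ x ∈ K ∩ closure (ball x₀ (3 * r₀ / 4)), δ x ≤ ⨆ k, 10 * ri k) ∧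
        (⨆ k, 10 * ri k) ≤ r₀ / 4 ∧
        (∀ x ∈ K ∩ closure (ball x₀ (3 * r₀ / 4)), ∀ r ∈ Set.Ioc (δ x) (r₀ / 4),
          flatness K x r ≤ 4 * τ) ∧
        GeomFn K x₀ r₀ (3 * r₀ / 4) (4 * τ) δ :=
  delta_is_geometric_function_general N hN α
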